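/- Let C be a stable curve of compact type of genus g ≥ 2 with principal component X^{pr}, and let d_bar be a multidegree of total degree 1 on C that is X^{pr}-quasistable (with respect to the canonical polarization E_1). Then d_bar assigns degree 1 to X^{pr} and degree 0 to every other irreducible component. -/

import Mathlib

open Finset

/-- An abstract (combinatorial) model of a nodal curve: a finite set of irreducible
components `V` (with geometric genus `w v`), and a finite set of nodes `N`, each node
lying on the (unordered pair of) components recorded by `ends`. -/
structure NodalCurve where
  V : Type
  N : Type
  [instFV : Fintype V]
  [instDV : DecidableEq V]
  [instFN : Fintype N]
  [instDN : DecidableEq N]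
  ends : N → Sym2 V
  w : V → ℕ

namespace NodalCurve

variable (C : NodalCurve)

instance : Fintype C.V := C.instFV
instance : DecidableEq C.V := C.instDV
instance : Fintype C.N := C.instFN
instance : DecidableEq C.N := C.instDN

/-- The dual graph of the curve (as a simple graph on the components). -/
def graph : SimpleGraph C.V :=
  SimpleGraph.fromRel (fun u v => ∃ n, C.ends n = s(u, v))

/-- The number of branches (ends) of the node `n` lying on the subcurve `S`. -/
def endsIn (S : Finset C.V) (n : C.N) : ℕ :=
  Sym2.lift ⟨fun a b => (if a ∈ S then 1 else 0) + (if b ∈ S then 1 else 0),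
    fun _ _ => add_comm _ _⟩ (C.ends n)

/-- `k S = #(Y ∩ Y')`: the number of nodes where the subcurve `S` meets its complement. -/
def k (S : Finset C.V) : ℕ := (univ.filter fun n => C.endsIn S n = 1).card

/-- nodes both of whose branches lie on `S`. -/
def internalNodes (S : Finset C.V) : ℕ := (univ.filter fun n => C.endsIn S n = 2).card

/-- The (arithmetic) genus of the curve. -/
def genus : ℤ :=
  ∑ v, (C.w v : ℤ) + (Fintype.card C.N : ℤ) - (Fintype.card C.V : ℤ) + 1

/-- The genus `1 - χ(O_Y)` of a (connected) subcurve with components `S`. -/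
def genusSub (S : Finset C.V) : ℤ :=
  ∑ v ∈ S, (C.w v : ℤ) + (C.internalNodes S : ℤ) - (S.card : ℤ) + 1

/-- `χ(O_Y)` for the subcurve `Y` with components `S`. -/
def chiO (S : Finset C.V) : ℤ :=
  (S.card : ℤ) - ∑ v ∈ S, (C.w v : ℤ) - (C.internalNodes S : ℤ)

/-- The degree of `ω_C` restricted to the subcurve with components `S`. -/
def degω (S : Finset C.V) : ℤ :=
  ∑ v ∈ S, (2 * (C.w v : ℤ) - 2) + ∑ n, (C.endsIn S n : ℤ)

/-- Connectedness of the subcurve with components `S`. -/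
def connectedSub (S : Finset C.V) : Prop := (C.graph.induce (S : Set C.V)).Connected

/-- Connectedness of the curve. -/
def Conn : Prop := C.graph.Connected

/-- The curve is of compact type: every node is separating, i.e. the dual graph
(with its multiple edges and loops) is a tree. -/
def CompactType : Prop :=
  Function.Injective C.ends ∧ (∀ n, ¬ (C.ends n).IsDiag) ∧ C.graph.IsTree

/-- Deligne–Mumford stability. -/
def Stable : Prop := ∀ v, 0 < 2 * (C.w v : ℤ) - 2 + ∑ n, (C.endsIn {v} n : ℤ)

/-- A tail: a subcurve meeting its complement in exactly one node. -/
def isTail (S : Finset C.V) : Prop := C.k S = 1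

/-- The degree `d_Y` of a multidegree `e` on the subcurve with components `S`. -/
def degSub (e : C.V → ℤ) (S : Finset C.V) : ℤ := ∑ v ∈ S, e v

/-- The total degree of a multidegree. -/
def totalDeg (e : C.V → ℤ) : ℤ := ∑ v, e v

/-- Semistability (w.r.t. the canonical polarization) at the subcurve `S`:
`|d_Y - d·deg(ω_C|_Y)/(2g-2)| ≤ k_Y/2`. -/
def semistableAt (e : C.V → ℤ) (S : Finset C.V) : Prop :=
  |(C.degSub e S : ℚ) - (C.totalDeg e : ℚ) * (C.degω S : ℚ) / (2 * (C.genus : ℚ) - 2)|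
    ≤ (C.k S : ℚ) / 2

/-- The strict lower inequality of quasistability at the subcurve `S`:
`d_Y - d·deg(ω_C|_Y)/(2g-2) > -k_Y/2`. -/
def quasistableLowAt (e : C.V → ℤ) (S : Finset C.V) : Prop :=
  -((C.k S : ℚ) / 2) <
    (C.degSub e S : ℚ) - (C.totalDeg e : ℚ) * (C.degω S : ℚ) / (2 * (C.genus : ℚ) - 2)

/-- A semistable multidegree. -/
def semistable (e : C.V → ℤ) : Prop :=
  ∀ S : Finset C.V, S.Nonempty → S ≠ univ → C.semistableAt e S

/-- An `X`-quasistable multidegree. -/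
def Xquasistable (X : C.V) (e : C.V → ℤ) : Prop :=
  C.semistable e ∧
    ∀ S : Finset C.V, S.Nonempty → S ≠ univ → X ∈ S → C.quasistableLowAt e S

/-- A `d̄`-big tail: `d_Z·deg(ω_C) - d·deg(ω_C|_Z) < 2g_Z - g`. -/
def isBigTail (e : C.V → ℤ) (S : Finset C.V) : Prop :=
  C.isTail S ∧
    C.degSub e S * (2 * C.genus - 2) - C.totalDeg e * C.degω S
      < 2 * C.genusSub S - C.genus

/-- `S` is (the set of components of) a connected component of the complement `X'`
of the irreducible component `x`. -/
def complComponent (x : C.V) (S : Finset C.V) : Prop :=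
  x ∉ S ∧ S.Nonempty ∧ C.connectedSub S ∧
    ∀ u ∈ S, ∀ v : C.V, C.graph.Adj u v → v ≠ x → v ∈ S

/-- `T` is (the set of components of) a connected component of the subcurve `S`. -/
def subComponent (S T : Finset C.V) : Prop :=
  T ⊆ S ∧ T.Nonempty ∧ C.connectedSub T ∧
    ∀ u ∈ T, ∀ v ∈ S, C.graph.Adj u v → v ∈ T

/-- A central component: every connected component `Z` of `X'` has `g_Z < g/2`. -/
def central (x : C.V) : Prop :=
  ∀ S : Finset C.V, C.complComponent x S → 2 * C.genusSub S < C.genus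

/-- A semicentral component: every connected component `Z` of `X'` has `g_Z ≤ g/2`. -/
def semicentral (x : C.V) : Prop :=
  ∀ S : Finset C.V, C.complComponent x S → 2 * C.genusSub S ≤ C.genus

end NodalCurve

/-!
Root the dual tree at `X^{pr}`. For every other component `v`, the branch of components lying
behind `v` is a tail; its genus is positive by stability and at most `g/2`, because it sits
inside a connected component of the complement of `X^{pr}`. Semistability at such a tail and
quasistability at its complement (which contains `X^{pr}`) squeeze its degree into `(-1/2, 1)`,
so every branch has degree `0`. Inverting these branch sums over the rooted tree gives degree `0`
at every `v ≠ X^{pr}`, hence degree `1` at `X^{pr}`.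
-/

namespace SimpleGraph

variable {V : Type*} {G : SimpleGraph V}

lemma connected_induce_of_forall_walk {s : Set V} {c : V} (hc : c ∈ s)
    (h : ∀ t ∈ s, ∃ p : G.Walk c t, ∀ z ∈ p.support, z ∈ s) : (G.induce s).Connected := by
  refine G.induce_connected_of_patches c hc fun {t} ht => ?_
  obtain ⟨p, hp⟩ := h t ht
  exact ⟨{z | z ∈ p.support}, hp, p.start_mem_support, p.end_mem_support,
    p.connected_induce_support.preconnected _ _⟩

lemma Connected.exists_walk_of_induce {s : Set V} (h : (G.induce s).Connected) {a b : V}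
    (ha : a ∈ s) (hb : b ∈ s) : ∃ p : G.Walk a b, ∀ z ∈ p.support, z ∈ s := by
  obtain ⟨p⟩ := h.preconnected ⟨a, ha⟩ ⟨b, hb⟩
  -- general endpoints: with `⟨a, ha⟩` the mapped endpoints reduce and `Walk.support_map` fails
  have hmap {x y : s} (q : (G.induce s).Walk x y) :
      ∀ z ∈ (q.map (Embedding.induce s).toHom).support, z ∈ s := by
    intro z hz
    rw [Walk.support_map, List.mem_map] at hz
    obtain ⟨w, -, rfl⟩ := hz
    exact w.2
  exact ⟨_, hmap p⟩

namespace IsTree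

variable (hG : G.IsTree) (r : V)

noncomputable def rootPath (t : V) : G.Walk r t := (hG.existsUnique_path r t).exists.choose

lemma isPath_rootPath (t : V) : (hG.rootPath r t).IsPath :=
  (hG.existsUnique_path r t).exists.choose_spec

variable {hG r}

lemma eq_rootPath {t : V} {p : G.Walk r t} (hp : p.IsPath) : p = hG.rootPath r t :=
  (hG.existsUnique_path r t).unique hp (hG.isPath_rootPath r t)

lemma rootPath_self : hG.rootPath r r = Walk.nil := (eq_rootPath Walk.IsPath.nil).symm

variable [DecidableEq V]

lemma rootPath_eq_takeUntil {u t : V} (hu : u ∈ (hG.rootPath r t).support) :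
    hG.rootPath r u = (hG.rootPath r t).takeUntil u hu :=
  (eq_rootPath ((hG.isPath_rootPath r t).takeUntil hu)).symm

lemma support_rootPath_subset {u t : V} (hu : u ∈ (hG.rootPath r t).support) :
    (hG.rootPath r u).support ⊆ (hG.rootPath r t).support := by
  rw [rootPath_eq_takeUntil hu]
  exact Walk.support_takeUntil_subset_support _ hu

lemma length_rootPath_lt {u t : V} (hu : u ∈ (hG.rootPath r t).support) (hut : u ≠ t) :
    (hG.rootPath r u).length < (hG.rootPath r t).length := by
  rw [rootPath_eq_takeUntil hu]
  exact Walk.length_takeUntil_lt_length hu hut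

variable [Fintype V]

variable (hG r) in
noncomputable def branch (v : V) : Finset V := {t | v ∈ (hG.rootPath r t).support}

lemma mem_branch {v t : V} : t ∈ hG.branch r v ↔ v ∈ (hG.rootPath r t).support := by
  simp [branch]

lemma self_mem_branch (v : V) : v ∈ hG.branch r v :=
  mem_branch.2 (Walk.end_mem_support _)

lemma root_notMem_branch {v : V} (hv : v ≠ r) : r ∉ hG.branch r v := by
  simp [mem_branch, rootPath_self, hv]

lemma branch_subset_branch {u v : V} (hu : u ∈ (hG.rootPath r v).support) :
    hG.branch r v ⊆ hG.branch r u :=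
  fun _ ht => mem_branch.2 (support_rootPath_subset (mem_branch.1 ht) hu)

lemma connected_induce_branch (v : V) : (G.induce (hG.branch r v : Set V)).Connected := by
  refine connected_induce_of_forall_walk (self_mem_branch v) fun t ht => ?_
  have hv := mem_branch.1 ht
  refine ⟨(hG.rootPath r t).dropUntil v hv, fun z hz => mem_branch.2 ?_⟩
  -- the path to `z` is an initial segment of the path to `t`, and it passes through `v`
  have hsplit := (hG.isPath_rootPath r t)
  rw [← Walk.take_spec _ hv, ← Walk.take_spec _ hz, Walk.append_assoc] at hsplit
  rw [← eq_rootPath hsplit.of_append_left, Walk.mem_support_append_iff]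
  exact Or.inl (Walk.end_mem_support _)

lemma connected_induce_compl_branch {v : V} (hv : v ≠ r) :
    (G.induce ((hG.branch r v)ᶜ : Finset V)).Connected := by
  refine connected_induce_of_forall_walk (by simpa using root_notMem_branch hv)
    fun t ht => ⟨hG.rootPath r t, fun z hz => ?_⟩
  simp only [Finset.coe_compl, Set.mem_compl_iff, Finset.mem_coe] at ht ⊢
  intro hzv
  exact ht (mem_branch.2 (support_rootPath_subset hz (mem_branch.1 hzv)))

lemma eq_zero_of_sum_branch_eq_zero {M : Type*} [AddCommMonoid M] (f : V → M)
    (h : ∀ v ≠ r, ∑ t ∈ hG.branch r v, f t = 0) {v : V} (hv : v ≠ r) : f v = 0 := by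
  induction hn : Fintype.card V - (hG.rootPath r v).length using Nat.strong_induction_on
    generalizing v with
  | _ n ih =>
    have hdeep : ∀ t ∈ (hG.branch r v).erase v, f t = 0 := fun t ht => by
      obtain ⟨htv, htB⟩ := Finset.mem_erase.1 ht
      have hlt := length_rootPath_lt (mem_branch.1 htB) (Ne.symm htv)
      have hbound := (hG.isPath_rootPath r t).length_lt
      exact ih _ (by omega) (fun hr => root_notMem_branch hv (hr ▸ htB)) rfl
    rw [← h v hv, ← Finset.add_sum_erase _ _ (self_mem_branch v), Finset.sum_eq_zero hdeep,
      add_zero]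

end IsTree

end SimpleGraph

namespace NodalCurve

open Finset

variable {C : NodalCurve}

lemma CompactType.isTree (hct : C.CompactType) : C.graph.IsTree := hct.2.2

lemma endsIn_of_ends_eq {S : Finset C.V} {n : C.N} {a b : C.V} (h : C.ends n = s(a, b)) :
    C.endsIn S n = (if a ∈ S then 1 else 0) + (if b ∈ S then 1 else 0) := by
  simp [endsIn, h]

lemma endsIn_add_endsIn_compl (S : Finset C.V) (n : C.N) :
    C.endsIn S n + C.endsIn Sᶜ n = 2 := by
  induction h : C.ends n using Sym2.ind with
  | _ a b =>
    rw [endsIn_of_ends_eq h, endsIn_of_ends_eq h]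
    by_cases ha : a ∈ S <;> by_cases hb : b ∈ S <;> simp [ha, hb]

lemma k_compl (S : Finset C.V) : C.k Sᶜ = C.k S := by
  unfold k
  congr 1
  refine filter_congr fun n _ => ?_
  have := endsIn_add_endsIn_compl S n
  omega

lemma sum_endsIn (S : Finset C.V) :
    ∑ n, C.endsIn S n = C.k S + 2 * C.internalNodes S := by
  have hsplit (n : C.N) : C.endsIn S n =
      (if C.endsIn S n = 1 then 1 else 0) + 2 * (if C.endsIn S n = 2 then 1 else 0) := by
    have := endsIn_add_endsIn_compl S n
    rcases (by omega : C.endsIn S n = 0 ∨ C.endsIn S n = 1 ∨ C.endsIn S n = 2) with h | h | h <;>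
      simp [h]
  rw [sum_congr rfl fun n _ => hsplit n, sum_add_distrib, ← mul_sum]
  simp [k, internalNodes, sum_boole]

lemma degω_eq (S : Finset C.V) : C.degω S = 2 * C.genusSub S - 2 + C.k S := by
  have h := congrArg (Nat.cast (R := ℤ)) (sum_endsIn S)
  push_cast at h
  simp only [degω, genusSub, h, sum_sub_distrib, ← mul_sum, sum_const, nsmul_eq_mul]
  ring

lemma degω_add_degω_compl (S : Finset C.V) : C.degω S + C.degω Sᶜ = 2 * C.genus - 2 := by
  have hnodes : ∑ n, ((C.endsIn S n : ℤ) + C.endsIn Sᶜ n) = 2 * Fintype.card C.N := by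
    simp [← Nat.cast_add, endsIn_add_endsIn_compl, mul_comm]
  have hcomps := sum_add_sum_compl S fun v => 2 * (C.w v : ℤ) - 2
  rw [sum_add_distrib] at hnodes
  rw [degω, degω, add_add_add_comm, hcomps, hnodes]
  simp only [genus, sum_sub_distrib, ← mul_sum, sum_const, card_univ, nsmul_eq_mul]
  ring

lemma degSub_add_degSub_compl (e : C.V → ℤ) (S : Finset C.V) :
    C.degSub e S + C.degSub e Sᶜ = C.totalDeg e :=
  sum_add_sum_compl S e

lemma degω_eq_sum_degω_singleton (S : Finset C.V) : C.degω S = ∑ v ∈ S, C.degω {v} := by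
  have hnode (n : C.N) : (C.endsIn S n : ℤ) = ∑ v ∈ S, (C.endsIn {v} n : ℤ) := by
    induction h : C.ends n using Sym2.ind with
    | _ a b =>
      simp only [endsIn_of_ends_eq h, mem_singleton, Nat.cast_add, Nat.cast_ite, Nat.cast_one,
        Nat.cast_zero, sum_add_distrib, sum_ite_eq]
  simp only [degω, sum_singleton, sum_add_distrib, hnode]
  rw [sum_comm]

lemma Stable.degω_mono (hst : C.Stable) {S T : Finset C.V} (h : S ⊆ T) :
    C.degω S ≤ C.degω T := by
  rw [degω_eq_sum_degω_singleton, degω_eq_sum_degω_singleton]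
  refine sum_le_sum_of_subset_of_nonneg h fun v _ _ => ?_
  have := hst v
  simp only [degω, sum_singleton]
  omega

lemma Stable.degω_pos (hst : C.Stable) {S : Finset C.V} (hS : S.Nonempty) : 0 < C.degω S := by
  obtain ⟨v, hv⟩ := hS
  refine lt_of_lt_of_le ?_ (hst.degω_mono (singleton_subset_iff.2 hv))
  simpa [degω] using hst v

lemma isTail.degω_eq {S : Finset C.V} (hS : C.isTail S) : C.degω S = 2 * C.genusSub S - 1 := by
  rw [NodalCurve.degω_eq, hS]
  ring

lemma Stable.genusSub_pos_of_isTail (hst : C.Stable) {S : Finset C.V} (hS : C.isTail S)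
    (hne : S.Nonempty) : 0 < C.genusSub S := by
  have := hst.degω_pos hne
  rw [hS.degω_eq] at this
  omega

lemma Stable.genusSub_le_genusSub_of_isTail (hst : C.Stable) {S T : Finset C.V}
    (hS : C.isTail S) (hT : C.isTail T) (h : S ⊆ T) : C.genusSub S ≤ C.genusSub T := by
  have := hst.degω_mono h
  rw [hS.degω_eq, hT.degω_eq] at this
  omega

lemma exists_ends_eq_of_adj {a b : C.V} (h : C.graph.Adj a b) : ∃ n, C.ends n = s(a, b) := by
  rw [graph, SimpleGraph.fromRel_adj] at h
  rcases h.2 with ⟨n, hn⟩ | ⟨n, hn⟩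
  · exact ⟨n, hn⟩
  · exact ⟨n, hn.trans Sym2.eq_swap⟩

lemma adj_of_ends_eq {n : C.N} {a b : C.V} (h : C.ends n = s(a, b)) (hab : a ≠ b) :
    C.graph.Adj a b := by
  rw [graph, SimpleGraph.fromRel_adj]
  exact ⟨hab, Or.inl ⟨n, h⟩⟩

lemma endsIn_eq_one {S : Finset C.V} {n : C.N} {a b : C.V} (h : C.ends n = s(a, b))
    (ha : a ∈ S) (hb : b ∉ S) : C.endsIn S n = 1 := by
  simp [endsIn_of_ends_eq h, ha, hb]

lemma exists_ends_eq_of_endsIn_eq_one {S : Finset C.V} {n : C.N} (h : C.endsIn S n = 1) :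
    ∃ a ∈ S, ∃ b ∉ S, C.ends n = s(a, b) := by
  induction hn : C.ends n using Sym2.ind with
  | _ a b =>
    rw [endsIn_of_ends_eq hn] at h
    by_cases ha : a ∈ S <;> by_cases hb : b ∈ S <;> simp only [ha, hb] at h <;> try omega
    · exact ⟨a, ha, b, hb, rfl⟩
    · exact ⟨b, hb, a, ha, Sym2.eq_swap⟩

lemma one_le_k (hconn : C.graph.Connected) {S : Finset C.V} {a b : C.V} (ha : a ∈ S)
    (hb : b ∉ S) : 1 ≤ C.k S := by
  obtain ⟨d, -, hd, hd'⟩ := (hconn a b).some.exists_boundary_dart (S : Set C.V) ha hb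
  obtain ⟨n, hn⟩ := exists_ends_eq_of_adj d.adj
  exact card_pos.2 ⟨n, mem_filter.2 ⟨mem_univ n, endsIn_eq_one hn hd hd'⟩⟩

/-- On a curve of compact type, two nodes joining `S` to its complement would close up a cycle
through `S` and `Sᶜ`; since every edge of a tree is a bridge, there is at most one. -/
lemma k_le_one (hct : C.CompactType) {S : Finset C.V} (hS : C.connectedSub S)
    (hSc : C.connectedSub Sᶜ) : C.k S ≤ 1 := by
  refine card_le_one.2 fun n₁ hn₁ n₂ hn₂ => ?_
  obtain ⟨a₁, ha₁, b₁, hb₁, h₁⟩ := exists_ends_eq_of_endsIn_eq_one (mem_filter.1 hn₁).2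
  obtain ⟨a₂, ha₂, b₂, hb₂, h₂⟩ := exists_ends_eq_of_endsIn_eq_one (mem_filter.1 hn₂).2
  by_contra hne
  have hedge : s(a₁, b₁) ≠ s(a₂, b₂) := fun h => hne (hct.1 (h₁.trans (h.trans h₂.symm)))
  have hadj₁ := adj_of_ends_eq h₁ fun h => hb₁ (h ▸ ha₁)
  have hadj₂ := adj_of_ends_eq h₂ fun h => hb₂ (h ▸ ha₂)
  obtain ⟨p, hp⟩ := hS.exists_walk_of_induce (mem_coe.2 ha₁) (mem_coe.2 ha₂)
  obtain ⟨q, hq⟩ := hSc.exists_walk_of_induce (by simpa using hb₂) (by simpa using hb₁)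
  have hbridge := SimpleGraph.isBridge_iff_forall_walk_mem_edges.1
    (SimpleGraph.isAcyclic_iff_forall_adj_isBridge.1 hct.isTree.isAcyclic hadj₁)
    (p.append (.cons hadj₂ q))
  rw [SimpleGraph.Walk.edges_append, SimpleGraph.Walk.edges_cons, List.mem_append,
    List.mem_cons] at hbridge
  rcases hbridge with hp' | h | hq'
  · exact hb₁ (hp _ (p.snd_mem_support_of_mem_edges hp'))
  · exact hedge h
  · simpa [ha₁] using hq _ (q.fst_mem_support_of_mem_edges hq')

lemma isTail_of_connectedSub (hct : C.CompactType) {S : Finset C.V} (hS : C.connectedSub S)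
    (hSc : C.connectedSub Sᶜ) : C.isTail S := by
  obtain ⟨⟨a, ha⟩⟩ := hS.nonempty
  obtain ⟨⟨b, hb⟩⟩ := hSc.nonempty
  exact le_antisymm (k_le_one hct hS hSc) (one_le_k hct.isTree.connected ha (by simpa using hb))

/-- The only node leaving the tail `S` is the one at `x`, so `S` is closed under adjacency
away from `x`. -/
lemma complComponent_of_isTail {S : Finset C.V} {x u : C.V} (hS : C.isTail S)
    (hconn : C.connectedSub S) (hx : x ∉ S) (hu : u ∈ S) (hxu : C.graph.Adj x u) :
    C.complComponent x S := by
  refine ⟨hx, ⟨u, hu⟩, hconn, fun a ha b hab hbx => ?_⟩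
  by_contra hb
  obtain ⟨n₁, h₁⟩ := exists_ends_eq_of_adj hxu.symm
  obtain ⟨n₂, h₂⟩ := exists_ends_eq_of_adj hab
  have hn : n₁ = n₂ := card_le_one.1 hS.le n₁ (mem_filter.2 ⟨mem_univ _, endsIn_eq_one h₁ hu hx⟩)
    n₂ (mem_filter.2 ⟨mem_univ _, endsIn_eq_one h₂ ha hb⟩)
  rw [hn, h₂, Sym2.eq_iff] at h₁
  rcases h₁ with ⟨-, rfl⟩ | ⟨rfl, -⟩
  · exact hbx rfl
  · exact hx ha

lemma isTail_branch (hct : C.CompactType) {r v : C.V} (hv : v ≠ r) :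
    C.isTail (hct.isTree.branch r v) :=
  isTail_of_connectedSub hct (hct.isTree.connected_induce_branch v)
    (hct.isTree.connected_induce_compl_branch hv)

/-- The branch at the first vertex after the root on the path to `v` is a connected component of
the complement of the root that contains the branch at `v`. -/
lemma exists_complComponent_superset_branch (hct : C.CompactType) {r v : C.V} (hv : v ≠ r) :
    ∃ Z, C.complComponent r Z ∧ C.isTail Z ∧ hct.isTree.branch r v ⊆ Z := by
  set p := hct.isTree.rootPath r v
  have hlen : 0 < p.length :=
    Nat.pos_of_ne_zero fun h => hv (p.eq_of_length_eq_zero h).symm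
  have hru : C.graph.Adj r (p.getVert 1) := by simpa using p.adj_getVert_succ hlen
  have hur := hru.ne'
  exact ⟨_, complComponent_of_isTail (isTail_branch hct hur)
    (hct.isTree.connected_induce_branch _) (hct.isTree.root_notMem_branch hur)
    (hct.isTree.self_mem_branch _) hru, isTail_branch hct hur,
    hct.isTree.branch_subset_branch (p.getVert_mem_support 1)⟩

lemma two_mul_genus_sub_two_pos (hg : 1 < C.genus) : (0 : ℚ) < 2 * C.genus - 2 := by
  have : (1 : ℚ) < C.genus := by exact_mod_cast hg
  linarith

lemma sub_div_eq_div (e : C.V → ℤ) (S : Finset C.V) (hg : 1 < C.genus) :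
    (C.degSub e S : ℚ) - C.totalDeg e * C.degω S / (2 * C.genus - 2) =
      (C.degSub e S * (2 * C.genus - 2) - C.totalDeg e * C.degω S) / (2 * C.genus - 2) := by
  rw [sub_div, mul_div_cancel_right₀ _ (two_mul_genus_sub_two_pos hg).ne']

lemma semistableAt.neg_k_le {e : C.V → ℤ} {S : Finset C.V} (h : C.semistableAt e S)
    (hg : 1 < C.genus) : -(C.k S * (2 * C.genus - 2)) ≤
      2 * (C.degSub e S * (2 * C.genus - 2) - C.totalDeg e * C.degω S) := by
  have h := (abs_le.1 h).1
  rw [sub_div_eq_div e S hg, le_div_iff₀ (two_mul_genus_sub_two_pos hg)] at h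
  rw [← Int.cast_le (R := ℚ)]
  push_cast
  linarith

lemma quasistableLowAt.neg_k_lt {e : C.V → ℤ} {S : Finset C.V} (h : C.quasistableLowAt e S)
    (hg : 1 < C.genus) : -(C.k S * (2 * C.genus - 2)) <
      2 * (C.degSub e S * (2 * C.genus - 2) - C.totalDeg e * C.degω S) := by
  rw [quasistableLowAt, sub_div_eq_div e S hg, lt_div_iff₀ (two_mul_genus_sub_two_pos hg)] at h
  rw [← Int.cast_lt (R := ℚ)]
  push_cast
  linarith

/-- A tail `S` of genus at most `g/2` avoiding `X` gets degree `0`: semistability at `S` forces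
`d_S > -1/2`, and quasistability at `Sᶜ ∋ X` forces `d_S < 1`. -/
lemma degSub_eq_zero_of_isTail (hg : 2 ≤ C.genus) {X : C.V} {e : C.V → ℤ}
    (hd : C.totalDeg e = 1) (hq : C.Xquasistable X e) {S : Finset C.V} (hS : C.isTail S)
    (hne : S.Nonempty) (hX : X ∉ S) (hpos : 0 < C.genusSub S)
    (hle : 2 * C.genusSub S ≤ C.genus) : C.degSub e S = 0 := by
  have hXc : X ∈ Sᶜ := mem_compl.2 hX
  have hlow := (hq.1 S hne fun h => hX (h ▸ mem_univ X)).neg_k_le (by omega)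
  have hlowc := (hq.2 Sᶜ ⟨X, hXc⟩ (compl_ne_univ_iff_nonempty S |>.2 hne) hXc).neg_k_lt
    (by omega)
  have hdeg := degSub_add_degSub_compl e S
  have hω := degω_add_degω_compl S
  rw [k_compl, show C.k S = 1 from hS, hd, eq_sub_of_add_eq' hdeg, hd,
    eq_sub_of_add_eq' hω, hS.degω_eq, Nat.cast_one] at hlowc
  rw [show C.k S = 1 from hS, hd, hS.degω_eq, Nat.cast_one] at hlow
  have hD : 0 ≤ 2 * C.genus - 2 := by omega
  have hlt : C.degSub e S < 1 := by
    by_contra h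
    nlinarith [mul_le_mul_of_nonneg_right (not_lt.1 h) hD]
  have hge : 0 ≤ C.degSub e S := by
    by_contra h
    nlinarith [mul_le_mul_of_nonneg_right (Int.lt_iff_add_one_le.1 (not_le.1 h)) hD]
  omega

end NodalCurve

theorem quasistable_multidegree_degree_one_general (C : NodalCurve)
    (hct : C.CompactType) (hst : C.Stable) (hg : 2 ≤ C.genus)
    (Xpr : C.V) (hpr : C.semicentral Xpr)
    (e : C.V → ℤ) (hd : C.totalDeg e = 1) (hq : C.Xquasistable Xpr e) :
    e Xpr = 1 ∧ ∀ v : C.V, v ≠ Xpr → e v = 0 := by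
  have hbranch (v : C.V) (hv : v ≠ Xpr) : ∑ t ∈ hct.isTree.branch Xpr v, e t = 0 := by
    obtain ⟨Z, hZ, hZtail, hBZ⟩ := NodalCurve.exists_complComponent_superset_branch hct hv
    have hB := NodalCurve.isTail_branch hct hv
    have hne : (hct.isTree.branch Xpr v).Nonempty := ⟨v, hct.isTree.self_mem_branch v⟩
    exact NodalCurve.degSub_eq_zero_of_isTail hg hd hq hB hne
      (hct.isTree.root_notMem_branch hv) (hst.genusSub_pos_of_isTail hB hne)
      (by linarith [hst.genusSub_le_genusSub_of_isTail hB hZtail hBZ, hpr Z hZ])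
  have hzero (v : C.V) (hv : v ≠ Xpr) : e v = 0 :=
    hct.isTree.eq_zero_of_sum_branch_eq_zero e hbranch hv
  refine ⟨?_, hzero⟩
  rw [← hd, NodalCurve.totalDeg, Finset.sum_eq_single_of_mem Xpr (Finset.mem_univ _)
    fun v _ hv => hzero v hv]

/-- a `X^{pr}`-quasistable multidegree of total degree 1 on a stable curve of
compact type of genus `g ≥ 2` assigns degree `1` to the principal component `X^{pr}` and
degree `0` to every other component. -/
theorem quasistable_multidegree_degree_one (C : NodalCurve) (hconn : C.Conn)
    (hct : C.CompactType) (hst : C.Stable) (hg : 2 ≤ C.genus)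
    (Xpr : C.V) (hpr : C.semicentral Xpr)
    (e : C.V → ℤ) (hd : C.totalDeg e = 1) (hq : C.Xquasistable Xpr e) :
    e Xpr = 1 ∧ ∀ v : C.V, v ≠ Xpr → e v = 0 :=
  quasistable_multidegree_degree_one_general C hct hst hg Xpr hpr e hd hq
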